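/- arXiv:2209.12082 — 3 statements merged into one kernel-verified Lean document; each statement's English description precedes it below -/
import Mathlib

section
/- For every κ ∈ (0,1) and every sufficiently large n, there exists an undirected graph G on vertex set {1,...,n} with at most C·n^{4/3}·log n / κ edges (for some absolute constant C) such that for every pair of disjoint vertex sets H_1, H_2 each of size at least κ·n^{2/3}, there is at least one edge of G between H_1 and H_2. -/
open Finset

private lemma aux_choose (N M : ℕ) : ∀ k, (N - k).choose M * N ^ k ≤ N.choose M * (N - M) ^ k := by
  intro k
  induction k with
  | zero => simp
  | succ k ih =>
    rcases le_or_gt N k with h | h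
    · have h0 : N - (k + 1) = 0 := by omega
      rw [h0]
      cases M with
      | zero => simp
      | succ M => simp [Nat.choose_eq_zero_of_lt (Nat.succ_pos M)]
    · have hk : 0 < N - k := by omega
      have h1 : N - (k + 1) + 1 = N - k := by omega
      have key : (N - (k + 1)).choose M * (N - k) = (N - k).choose M * (N - k - M) := by
        have := Nat.choose_mul_succ_eq (N - (k + 1)) M
        rw [h1] at this
        exact this
      have step : N * (N - k - M) ≤ (N - M) * (N - k) := by
        rcases le_or_gt (N - k) M with hm | hm
        · have h2 : N - k - M = 0 := by omega
          simp [h2]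
        · have hM : M ≤ N := by omega
          zify [hM, (by omega : M ≤ N - k), (by omega : k ≤ N)]
          nlinarith [mul_nonneg (Int.natCast_nonneg M) (Int.natCast_nonneg k)]
      have chain : (N - (k + 1)).choose M * N ^ (k + 1) * (N - k)
          ≤ N.choose M * (N - M) ^ (k + 1) * (N - k) := by
        calc (N - (k + 1)).choose M * N ^ (k + 1) * (N - k)
            = ((N - (k + 1)).choose M * (N - k)) * N ^ (k + 1) := by ring
          _ = ((N - k).choose M * (N - k - M)) * N ^ (k + 1) := by rw [key]
          _ = ((N - k).choose M * N ^ k) * (N * (N - k - M)) := by ring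
          _ ≤ (N.choose M * (N - M) ^ k) * ((N - M) * (N - k)) := Nat.mul_le_mul ih step
          _ = N.choose M * (N - M) ^ (k + 1) * (N - k) := by ring
      exact Nat.le_of_mul_le_mul_right chain hk

private lemma exists_hitting {α ι : Type*} [DecidableEq α] (E : Finset α) (I : Finset ι)
    (K : ι → Finset α) (k M : ℕ)
    (hsub : ∀ i ∈ I, K i ⊆ E)
    (hcard : ∀ i ∈ I, (K i).card = k)
    (hcount : I.card * (E.card - k).choose M < E.card.choose M) :
    ∃ S : Finset α, S ⊆ E ∧ S.card = M ∧ ∀ i ∈ I, (S ∩ K i).Nonempty := by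
  classical
  by_contra hcon
  push_neg at hcon
  have hsubset : E.powersetCard M ⊆ I.biUnion fun i => (E \ K i).powersetCard M := by
    intro S hS
    rw [Finset.mem_powersetCard] at hS
    obtain ⟨i, hi, hempty⟩ := hcon S hS.1 hS.2
    rw [Finset.mem_biUnion]
    refine ⟨i, hi, Finset.mem_powersetCard.2 ⟨fun x hx => Finset.mem_sdiff.2
      ⟨hS.1 hx, fun hK => ?_⟩, hS.2⟩⟩
    have : x ∈ S ∩ K i := Finset.mem_inter.2 ⟨hx, hK⟩
    simp [hempty] at this
  have h1 := Finset.card_le_card hsubset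
  rw [Finset.card_powersetCard] at h1
  have h2 : (I.biUnion fun i => (E \ K i).powersetCard M).card
      ≤ I.card * (E.card - k).choose M := by
    refine le_trans Finset.card_biUnion_le ?_
    calc ∑ i ∈ I, ((E \ K i).powersetCard M).card
        ≤ ∑ _i ∈ I, (E.card - k).choose M := by
          refine Finset.sum_le_sum fun i hi => ?_
          rw [Finset.card_powersetCard, Finset.card_sdiff_of_subset (hsub i hi), hcard i hi]
      _ = I.card * (E.card - k).choose M := by rw [Finset.sum_const, smul_eq_mul]
  omega

set_option maxHeartbeats 2000000 in
/-- For every `κ ∈ (0,1)` and sufficiently large `n` there is a graph on `[n]`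
with at most `C·n^{4/3}·log n / κ` edges such that any two disjoint vertex sets
of size at least `κ·n^{2/3}` are joined by an edge. -/
theorem stmt6 :
    ∃ C : ℝ, 0 < C ∧ ∀ κ : ℝ, κ ∈ Set.Ioo (0:ℝ) 1 → ∃ N : ℕ, ∀ n : ℕ, N ≤ n →
      ∃ G : SimpleGraph (Fin n),
        (G.edgeSet.ncard : ℝ) ≤ C * (n : ℝ) ^ ((4:ℝ)/3) * Real.log n / κ ∧
        ∀ H1 H2 : Finset (Fin n), Disjoint H1 H2 →
          κ * (n : ℝ) ^ ((2:ℝ)/3) ≤ (H1.card : ℝ) →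
          κ * (n : ℝ) ^ ((2:ℝ)/3) ≤ (H2.card : ℝ) →
          ∃ a ∈ H1, ∃ b ∈ H2, G.Adj a b := by
  classical
  refine ⟨10, by norm_num, ?_⟩
  rintro κ ⟨hκ0, hκ1⟩
  refine ⟨3, fun n hn => ?_⟩
  have hn0 : (0:ℝ) < n := by
    have : (3:ℝ) ≤ n := by exact_mod_cast hn
    linarith
  have hL1 : 1 ≤ Real.log n := by
    rw [Real.le_log_iff_exp_le hn0]
    calc Real.exp 1 ≤ 2.7182818286 := Real.exp_one_lt_d9.le
      _ ≤ 3 := by norm_num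
      _ ≤ n := by exact_mod_cast hn
  -- parameters
  set t : ℕ := ⌈κ * (n:ℝ) ^ ((2:ℝ)/3)⌉₊ with ht
  have htpos : 0 < t := Nat.ceil_pos.2 (by positivity)
  have htR : κ * (n:ℝ) ^ ((2:ℝ)/3) ≤ (t:ℝ) := Nat.le_ceil _
  have htRpos : (0:ℝ) < t := by exact_mod_cast htpos
  set E : Finset (Sym2 (Fin n)) := Finset.univ.filter (fun e => ¬ e.IsDiag) with hE
  set Nc : ℕ := E.card with hNc
  have hNcpos : 0 < Nc := by
    refine Finset.card_pos.2 ⟨s((⟨0, by omega⟩ : Fin n), (⟨1, by omega⟩ : Fin n)), ?_⟩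
    rw [hE, Finset.mem_filter]
    refine ⟨Finset.mem_univ _, ?_⟩
    rw [Sym2.mk_isDiag_iff]
    intro h
    exact absurd (congrArg Fin.val h) (by simp)
  have hNcR : (0:ℝ) < Nc := by exact_mod_cast hNcpos
  have hNc2 : Nc ≤ n ^ 2 := by
    have h1 : Nc ≤ Fintype.card (Sym2 (Fin n)) := by
      rw [hNc, hE]
      exact (Finset.card_filter_le _ _).trans_eq (Finset.card_univ)
    have h2 : Fintype.card (Sym2 (Fin n)) = (n + 1).choose 2 := by
      rw [Sym2.card, Fintype.card_fin]
    have h3 : (n + 1).choose 2 = (n + 1) * n / 2 := by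
      rw [Nat.choose_two_right]
      simp
    have h4 : (n + 1) * n ≤ 2 * n ^ 2 := by nlinarith [hn]
    have h5 : (n + 1) * n / 2 ≤ 2 * n ^ 2 / 2 := Nat.div_le_div_right h4
    omega
  set M0 : ℕ := ⌈2 * (Nc:ℝ) * (Real.log n + 1) / t⌉₊ with hM0
  set M : ℕ := min Nc M0 with hM
  have hMN : M ≤ Nc := min_le_left _ _
  set k : ℕ := t * t with hk
  have hkpos : 0 < k := Nat.mul_pos htpos htpos
  -- the family of pairs
  set I : Finset (Finset (Fin n) × Finset (Fin n)) :=
    ((Finset.univ.powersetCard t) ×ˢ (Finset.univ.powersetCard t)).filter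
      (fun p => Disjoint p.1 p.2) with hI
  set K : Finset (Fin n) × Finset (Fin n) → Finset (Sym2 (Fin n)) :=
    fun p => (p.1 ×ˢ p.2).image (fun q => s(q.1, q.2)) with hK
  have hmemI : ∀ p ∈ I, p.1.card = t ∧ p.2.card = t ∧ Disjoint p.1 p.2 := by
    intro p hp
    rw [hI, Finset.mem_filter, Finset.mem_product, Finset.mem_powersetCard,
      Finset.mem_powersetCard] at hp
    exact ⟨hp.1.1.2, hp.1.2.2, hp.2⟩
  have hsub : ∀ p ∈ I, K p ⊆ E := by
    intro p hp e he
    rw [hK] at he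
    simp only [Finset.mem_image, Finset.mem_product] at he
    obtain ⟨⟨a, b⟩, ⟨ha, hb⟩, rfl⟩ := he
    rw [hE, Finset.mem_filter]
    refine ⟨Finset.mem_univ _, ?_⟩
    rw [Sym2.mk_isDiag_iff]
    intro hab
    exact Finset.disjoint_left.1 (hmemI p hp).2.2 ha (hab ▸ hb)
  have hcardK : ∀ p ∈ I, (K p).card = k := by
    intro p hp
    obtain ⟨h1, h2, hd⟩ := hmemI p hp
    rw [hK]
    rw [Finset.card_image_of_injOn, Finset.card_product, h1, h2, hk]
    intro q hq q' hq' hqq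
    simp only [Finset.coe_product, Set.mem_prod, Finset.mem_coe] at hq hq'
    rw [Sym2.eq_iff] at hqq
    rcases hqq with ⟨e1, e2⟩ | ⟨e1, e2⟩
    · exact Prod.ext e1 e2
    · exact absurd (e1 ▸ hq.1) (Finset.disjoint_left.1 hd.symm hq'.2)
  -- counting inequality
  have hcount : I.card * (Nc - k).choose M < Nc.choose M := by
    have hIcard : I.card ≤ n ^ (2 * t) := by
      calc I.card ≤ ((Finset.univ.powersetCard t (α := Fin n)) ×ˢ (Finset.univ.powersetCard t)).card :=
            Finset.card_filter_le _ _
        _ = n.choose t * n.choose t := by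
            rw [Finset.card_product, Finset.card_powersetCard, Finset.card_univ, Fintype.card_fin]
        _ ≤ n ^ t * n ^ t := Nat.mul_le_mul (Nat.choose_le_pow _ _) (Nat.choose_le_pow _ _)
        _ = n ^ (2 * t) := by rw [← pow_add]; ring_nf
    rcases le_or_gt Nc M0 with hmin | hmin
    · have hMeq : M = Nc := min_eq_left hmin
      have hz : (Nc - k).choose M = 0 := by
        rw [hMeq]
        exact Nat.choose_eq_zero_of_lt (by omega)
      rw [hz, Nat.mul_zero, hMeq, Nat.choose_self]
      omega
    · have hMeq : M = M0 := min_eq_right hmin.le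
      have hMR : 2 * (Nc:ℝ) * (Real.log n + 1) / t ≤ (M:ℝ) := by
        rw [hMeq]; exact Nat.le_ceil _
      -- real estimate
      rw [← Nat.cast_lt (α := ℝ), Nat.cast_mul]
      have hCpos : (0:ℝ) < (Nc.choose M : ℝ) := by
        exact_mod_cast Nat.choose_pos hMN
      have hchoose : ((Nc - k).choose M : ℝ) ≤ (Nc.choose M : ℝ) * (((Nc - M : ℕ):ℝ) / Nc) ^ k := by
        rw [div_pow, ← mul_div_assoc, le_div_iff₀ (pow_pos hNcR k)]
        exact_mod_cast aux_choose Nc M k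
      have hfrac : ((Nc - M : ℕ):ℝ) / Nc ≤ Real.exp (-((M:ℝ) / Nc)) := by
        rw [Nat.cast_sub hMN, sub_div, div_self hNcR.ne']
        have := Real.add_one_le_exp (-((M:ℝ) / Nc))
        linarith
      have hfracnn : (0:ℝ) ≤ ((Nc - M : ℕ):ℝ) / Nc := div_nonneg (Nat.cast_nonneg _) (Nat.cast_nonneg _)
      have hexp : (n:ℝ) ^ (2 * t) * Real.exp (-((M:ℝ) / Nc)) ^ k < 1 := by
        have e1 : (n:ℝ) ^ (2 * t) = Real.exp ((2 * t : ℕ) * Real.log n) := by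
          rw [Real.exp_nat_mul, Real.exp_log hn0]
        have e2 : Real.exp (-((M:ℝ) / Nc)) ^ k = Real.exp ((k:ℕ) * (-((M:ℝ) / Nc))) := by
          rw [Real.exp_nat_mul]
        rw [e1, e2, ← Real.exp_add]
        rw [Real.exp_lt_one_iff]
        have hkM : 2 * (t:ℝ) * (Real.log n + 1) ≤ (k:ℝ) * ((M:ℝ) / Nc) := by
          have h1 : (k:ℝ) = (t:ℝ) * t := by rw [hk]; push_cast; ring
          rw [h1]
          have h2 : 2 * (t:ℝ) * (Real.log n + 1)
              = (t:ℝ) * t * (2 * (Nc:ℝ) * (Real.log n + 1) / t / Nc) := by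
            field_simp [htRpos.ne', hNcR.ne']
          rw [h2]
          gcongr
        push_cast
        nlinarith [hkM, htRpos, hL1]
      calc (I.card : ℝ) * ((Nc - k).choose M : ℝ)
          ≤ (n:ℝ) ^ (2 * t) * ((Nc.choose M : ℝ) * (((Nc - M : ℕ):ℝ) / Nc) ^ k) := by
            refine mul_le_mul ?_ hchoose (Nat.cast_nonneg _) (by positivity)
            exact_mod_cast hIcard
        _ ≤ (n:ℝ) ^ (2 * t) * ((Nc.choose M : ℝ) * Real.exp (-((M:ℝ) / Nc)) ^ k) := by
            refine mul_le_mul_of_nonneg_left ?_ (by positivity)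
            exact mul_le_mul_of_nonneg_left (pow_le_pow_left₀ hfracnn hfrac k) hCpos.le
        _ = (Nc.choose M : ℝ) * ((n:ℝ) ^ (2 * t) * Real.exp (-((M:ℝ) / Nc)) ^ k) := by ring
        _ < (Nc.choose M : ℝ) * 1 := by
            exact mul_lt_mul_of_pos_left hexp hCpos
        _ = (Nc.choose M : ℝ) := mul_one _
  obtain ⟨S, hSE, hScard, hShit⟩ := exists_hitting E I K k M hsub hcardK (hNc ▸ hcount)
  refine ⟨SimpleGraph.fromEdgeSet ↑S, ?_, ?_⟩
  · have h1 : ((SimpleGraph.fromEdgeSet (↑S : Set (Sym2 (Fin n)))).edgeSet.ncard : ℝ) ≤ (M:ℝ) := by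
      have : (SimpleGraph.fromEdgeSet (↑S : Set (Sym2 (Fin n)))).edgeSet.ncard ≤ M := by
        calc (SimpleGraph.fromEdgeSet (↑S : Set (Sym2 (Fin n)))).edgeSet.ncard
            ≤ (↑S : Set (Sym2 (Fin n))).ncard := by
              rw [SimpleGraph.edgeSet_fromEdgeSet]
              exact Set.ncard_le_ncard Set.diff_subset S.finite_toSet
          _ = S.card := Set.ncard_coe_finset S
          _ = M := hScard
      exact_mod_cast this
    have hLnn : (0:ℝ) ≤ Real.log n + 1 := by linarith
    have h2 : (M:ℝ) ≤ 2 * (Nc:ℝ) * (Real.log n + 1) / t + 1 := by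
      have harg : (0:ℝ) ≤ 2 * (Nc:ℝ) * (Real.log n + 1) / t :=
        div_nonneg (mul_nonneg (mul_nonneg (by norm_num) hNcR.le) hLnn) htRpos.le
      calc (M:ℝ) ≤ (M0:ℝ) := by exact_mod_cast min_le_right Nc M0
        _ ≤ 2 * (Nc:ℝ) * (Real.log n + 1) / t + 1 := (Nat.ceil_lt_add_one harg).le
    have hNcR2 : (Nc:ℝ) ≤ (n:ℝ) ^ (2:ℕ) := by exact_mod_cast hNc2
    have hrp : (0:ℝ) < (n:ℝ) ^ ((2:ℝ)/3) := Real.rpow_pos_of_pos hn0 _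
    have h3 : 2 * (Nc:ℝ) * (Real.log n + 1) / t
        ≤ 2 * (n:ℝ) ^ (2:ℕ) * (Real.log n + 1) / (κ * (n:ℝ) ^ ((2:ℝ)/3)) := by
      refine div_le_div₀ (mul_nonneg (mul_nonneg (by norm_num) (by positivity)) hLnn)
        (mul_le_mul_of_nonneg_right (by linarith) hLnn) (by positivity) htR
    have h4 : 2 * (n:ℝ) ^ (2:ℕ) * (Real.log n + 1) / (κ * (n:ℝ) ^ ((2:ℝ)/3))
        = 2 * (n:ℝ) ^ ((4:ℝ)/3) * (Real.log n + 1) / κ := by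
      have e1 : (n:ℝ) ^ (2:ℕ) = (n:ℝ) ^ ((2:ℝ)) := by
        rw [← Real.rpow_natCast]; norm_num
      have e2 : (n:ℝ) ^ ((2:ℝ)) = (n:ℝ) ^ ((4:ℝ)/3) * (n:ℝ) ^ ((2:ℝ)/3) := by
        rw [← Real.rpow_add hn0]; norm_num
      rw [e1, e2]
      rw [div_eq_div_iff (by positivity) hκ0.ne']
      ring
    have hn1 : (1:ℝ) ≤ (n:ℝ) := by exact_mod_cast (by omega : 1 ≤ n)
    have hr1 : (1:ℝ) ≤ (n:ℝ) ^ ((4:ℝ)/3) :=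
      Real.one_le_rpow hn1 (by norm_num)
    have haL : (n:ℝ) ^ ((4:ℝ)/3) ≤ (n:ℝ) ^ ((4:ℝ)/3) * Real.log n :=
      le_mul_of_one_le_right (by linarith) hL1
    have h5 : 2 * (n:ℝ) ^ ((4:ℝ)/3) * (Real.log n + 1) / κ + 1
        ≤ 10 * (n:ℝ) ^ ((4:ℝ)/3) * Real.log n / κ := by
      have key : 2 * (n:ℝ) ^ ((4:ℝ)/3) * (Real.log n + 1) + κ
          ≤ 10 * (n:ℝ) ^ ((4:ℝ)/3) * Real.log n := by linarith [hr1, hL1, hκ1.le, haL]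
      have e3 : 2 * (n:ℝ) ^ ((4:ℝ)/3) * (Real.log n + 1) / κ + 1
          = (2 * (n:ℝ) ^ ((4:ℝ)/3) * (Real.log n + 1) + κ) / κ := by
        field_simp
      rw [e3, div_eq_mul_inv, div_eq_mul_inv]
      exact mul_le_mul_of_nonneg_right key (inv_nonneg.2 hκ0.le)
    calc ((SimpleGraph.fromEdgeSet (↑S : Set (Sym2 (Fin n)))).edgeSet.ncard : ℝ)
        ≤ (M:ℝ) := h1
      _ ≤ 2 * (Nc:ℝ) * (Real.log n + 1) / t + 1 := h2
      _ ≤ 2 * (n:ℝ) ^ ((4:ℝ)/3) * (Real.log n + 1) / κ + 1 := by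
          rw [← h4]; linarith [h3]
      _ ≤ 10 * (n:ℝ) ^ ((4:ℝ)/3) * Real.log n / κ := h5
  · intro H1 H2 hd h1 h2
    have ht1 : t ≤ H1.card := Nat.ceil_le.2 h1
    have ht2 : t ≤ H2.card := Nat.ceil_le.2 h2
    obtain ⟨A, hAs, hAcard⟩ := Finset.exists_subset_card_eq ht1
    obtain ⟨B, hBs, hBcard⟩ := Finset.exists_subset_card_eq ht2
    have hABd : Disjoint A B := hd.mono hAs hBs
    have hmem : (A, B) ∈ I := by
      rw [hI, Finset.mem_filter, Finset.mem_product]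
      exact ⟨⟨Finset.mem_powersetCard.2 ⟨Finset.subset_univ _, hAcard⟩,
        Finset.mem_powersetCard.2 ⟨Finset.subset_univ _, hBcard⟩⟩, hABd⟩
    obtain ⟨e, he⟩ := hShit (A, B) hmem
    rw [Finset.mem_inter] at he
    have heK := he.2
    rw [hK] at heK
    simp only [Finset.mem_image, Finset.mem_product] at heK
    obtain ⟨⟨a, b⟩, ⟨ha, hb⟩, rfl⟩ := heK
    refine ⟨a, hAs ha, b, hBs hb, ?_⟩
    rw [SimpleGraph.fromEdgeSet_adj]
    exact ⟨Finset.mem_coe.2 he.1, fun hab => Finset.disjoint_left.1 hABd ha (hab ▸ hb)⟩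
end

section
/- Let G be an undirected graph on n vertices such that every two disjoint vertex sets of size at least s have an edge between them, and let G⃗ be any orientation of G. Let W be a vertex set of size w ≥ s, and let F(W) = V ∖ (N⁺(W) ∪ W) be the set of vertices that are not in W and have no arc from W. Then for every S ⊆ F(W) with |S| ≥ s, the set of vertices of W receiving an arc from S has size at least w − s. -/
/-- If in the underlying graph any two disjoint sets of size `≥ s` are joined
by an edge, `W` has size `≥ s`, and `S` is a subset of the free set `F(W)` of
size `≥ s`, then at least `|W| − s` vertices of `W` receive an arc from `S`. -/
theorem stmt7 {V : Type*} [Fintype V] [DecidableEq V]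
    (R : V → V → Prop) [DecidableRel R]
    (s : ℕ)
    (hG : ∀ A B : Finset V, Disjoint A B → s ≤ A.card → s ≤ B.card →
      ∃ a ∈ A, ∃ b ∈ B, R a b ∨ R b a)
    (W : Finset V) (hW : s ≤ W.card)
    (F : Finset V)
    (hF : F = Finset.univ.filter (fun v => v ∉ W ∧ ∀ w ∈ W, ¬ R w v))
    (S : Finset V) (hS : S ⊆ F) (hScard : s ≤ S.card) :
    W.card - s ≤ (W.filter fun x => ∃ a ∈ S, R a x).card := by
  classical
  set T := W.filter (fun x => ¬ ∃ a ∈ S, R a x) with hT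
  have hdisj : Disjoint T S := by
    rw [Finset.disjoint_left]
    intro x hxT hxS
    have := hS hxS
    rw [hF, Finset.mem_filter] at this
    exact this.2.1 (Finset.mem_filter.mp hxT).1
  have hTs : T.card < s := by
    by_contra h
    push_neg at h
    obtain ⟨a, haT, b, hbS, hab⟩ := hG T S hdisj h hScard
    have haW := Finset.mem_filter.mp haT
    rcases hab with hab | hab
    · have := hS hbS
      rw [hF, Finset.mem_filter] at this
      exact this.2.2 a haW.1 hab
    · exact haW.2 ⟨b, hbS, hab⟩
  have hsplit := Finset.card_filter_add_card_filter_not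
    (s := W) (p := fun x => ∃ a ∈ S, R a x)
  have : T.card = (Finset.filter (fun a => ¬(fun x => ∃ a ∈ S, R a x) a) W).card := rfl
  rw [← this] at hsplit
  omega
end

section
/- Let M be a 0/1 matrix with row set R and column set C, |C| = n, such that every row has at least p·n ones. Let U ⊆ C with |U| = 2n^{2/3}, and let V' be a set of n^{2/3} columns of C ∖ U with the largest number of ones in M restricted to rows R. Then every column of V' has at least (p − 3n^{-1/3})·|R| ones in the submatrix M[R, V']. -/
/-- If every row of a 0/1 matrix has at least `p·n` ones among `n` columns,
`U` has `2n^{2/3}` columns, and `V'` is a set of `n^{2/3}` columns of `C ∖ U`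
of largest column-weight, then every column of `V'` has at least
`(p − 3n^{-1/3})·|R|` ones. -/
theorem stmt10 {I J : Type*} [DecidableEq I] [DecidableEq J]
    (M : I → J → Bool) (R : Finset I) (C : Finset J) (n : ℕ) (p : ℝ)
    (hC : C.card = n)
    (hrow : ∀ r ∈ R, p * (n : ℝ) ≤ ((C.filter fun c => M r c).card : ℝ))
    (U : Finset J) (hU : U ⊆ C) (hUcard : (U.card : ℝ) = 2 * (n : ℝ) ^ ((2:ℝ)/3))
    (V' : Finset J) (hV' : V' ⊆ C \ U)
    (hV'card : (V'.card : ℝ) = (n : ℝ) ^ ((2:ℝ)/3))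
    (htop : ∀ c ∈ V', ∀ c' ∈ (C \ U) \ V',
      ((R.filter fun r => M r c').card : ℝ) ≤ ((R.filter fun r => M r c).card : ℝ)) :
    ∀ c ∈ V', (p - 3 * (n : ℝ) ^ (-(1:ℝ)/3)) * (R.card : ℝ) ≤
      ((R.filter fun r => M r c).card : ℝ) := by
  intro c hc
  rcases Nat.eq_zero_or_pos n with hn0 | hn
  · exfalso
    subst hn0
    rw [Nat.cast_zero, Real.zero_rpow (by norm_num : (2:ℝ)/3 ≠ 0)] at hV'card
    have : V' = ∅ := Finset.card_eq_zero.mp (by exact_mod_cast hV'card)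
    simp [this] at hc
  have hnpos : (0:ℝ) < n := by exact_mod_cast hn
  set w : J → ℝ := fun c' => ((R.filter fun r => M r c').card : ℝ) with hw
  -- double counting
  have hdc : ∑ c' ∈ C \ U, w c' = ∑ r ∈ R, (((C \ U).filter fun c' => M r c').card : ℝ) := by
    simp only [hw, Finset.card_filter]
    push_cast
    rw [Finset.sum_comm]
  -- lower bound
  have key1 : (R.card : ℝ) * (p * n - U.card) ≤ ∑ c' ∈ C \ U, w c' := by
    rw [hdc]
    have : ∀ r ∈ R, p * n - U.card ≤ (((C \ U).filter fun c' => M r c').card : ℝ) := by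
      intro r hr
      have hsub : C.filter (fun c' => M r c') ⊆ ((C \ U).filter fun c' => M r c') ∪ U := by
        intro x hx
        simp only [Finset.mem_filter, Finset.mem_union, Finset.mem_sdiff] at *
        tauto
      have h1 : (C.filter (fun c' => M r c')).card ≤
          (((C \ U).filter fun c' => M r c') ∪ U).card := Finset.card_le_card hsub
      have h2 : ((((C \ U).filter fun c' => M r c') ∪ U).card : ℝ) ≤
          (((C \ U).filter fun c' => M r c').card : ℝ) + U.card := by
        exact_mod_cast Finset.card_union_le _ _
      have := hrow r hr
      have h1' : ((C.filter (fun c' => M r c')).card : ℝ) ≤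
          (((C \ U).filter fun c' => M r c') ∪ U).card := by exact_mod_cast h1
      linarith
    calc (R.card : ℝ) * (p * n - U.card) = ∑ _r ∈ R, (p * n - U.card) := by
          rw [Finset.sum_const, nsmul_eq_mul]
      _ ≤ _ := Finset.sum_le_sum this
  -- upper bound
  have key2 : ∑ c' ∈ C \ U, w c' ≤ (V'.card : ℝ) * R.card + n * w c := by
    rw [← Finset.sum_sdiff hV']
    have hA : ∑ c' ∈ (C \ U) \ V', w c' ≤ (((C \ U) \ V').card : ℝ) * w c := by
      have := Finset.sum_le_card_nsmul ((C \ U) \ V') w (w c) (fun c' hc' => htop c hc c' hc')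
      simpa [nsmul_eq_mul] using this
    have hB : ∑ c' ∈ V', w c' ≤ (V'.card : ℝ) * R.card := by
      have := Finset.sum_le_card_nsmul V' w (R.card : ℝ)
        (fun c' _ => by simp only [hw]; exact_mod_cast Finset.card_filter_le R _)
      simpa [nsmul_eq_mul] using this
    have hcard : (((C \ U) \ V').card : ℝ) ≤ n := by
      have h1 : ((C \ U) \ V').card ≤ C.card :=
        Finset.card_le_card ((Finset.sdiff_subset).trans Finset.sdiff_subset)
      rw [hC] at h1
      exact_mod_cast h1
    have hwc : 0 ≤ w c := Nat.cast_nonneg _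
    nlinarith [hA, hB, hcard, hwc]
  -- combine
  have hpow : (n:ℝ) ^ ((2:ℝ)/3) = n * (n:ℝ) ^ (-(1:ℝ)/3) := by
    rw [show (n:ℝ) * (n:ℝ) ^ (-(1:ℝ)/3) = (n:ℝ) ^ (1:ℝ) * (n:ℝ) ^ (-(1:ℝ)/3) by
        rw [Real.rpow_one],
      ← Real.rpow_add hnpos]
    norm_num
  have hfin : (n:ℝ) * ((p - 3 * (n : ℝ) ^ (-(1:ℝ)/3)) * R.card) ≤ (n:ℝ) * w c := by
    have hRnn : (0:ℝ) ≤ R.card := Nat.cast_nonneg _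
    nlinarith [key1, key2, hUcard, hV'card, hpow]
  exact le_of_mul_le_mul_left hfin hnpos
end
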